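/- In the Hessenberg index-2 setting with ψ = 0, ζ^z = 0, and adjoint terminal condition φ^{(y)}(T) = (I - ḡ_yᵀ (f̄_zᵀ ḡ_yᵀ)⁻¹ f̄_zᵀ) ζ^y |_{t=T}, the error in the QoI depending only on the differential variables at the terminal time satisfies (e^{(y)}(T), ζ^y) = (e^{(y)}(0), φ^{(y)}(0)) + ∫₀ᵀ (φ^{(y)}, f(Y,Z) - Ẏ) dt + ∫₀ᵀ (φ^{(z)}, g(Y)) dt - ((f̄_zᵀ ḡ_yᵀ)⁻¹ f̄_zᵀ ζ^y, g(Y))|_{t=T}. -/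

import Mathlib

open Matrix MeasureTheory

/-!
Pair the error `e = y - Y` with the adjoint `φ^{(y)}`. Along the interval, the linearization
identities and the adjoint DAE turn `d/dt (φ^{(y)}, e)` into the residual integrand
`(φ^{(y)}, f(Y,Z) - Ẏ) + (φ^{(z)}, g(Y))`: the term in `z - Z` is annihilated by
`f̄_zᵀ φ^{(y)} = 0`, and `ḡ_y e = -g(Y)`. The fundamental theorem of calculus then gives
`(φ^{(y)}, e)|₀ᵀ`, and at `t = T` the projected terminal condition splits `(φ^{(y)}(T), e(T))`
into `(e(T), ζ^y)` plus a term in `ḡ_y e(T) = -g(Y(T))`.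
-/

theorem HasDerivAt.dotProduct {𝕜 ι : Type*} [NontriviallyNormedField 𝕜] [Fintype ι]
    {u v : 𝕜 → ι → 𝕜} {u' v' : ι → 𝕜} {t : 𝕜}
    (hu : HasDerivAt u u' t) (hv : HasDerivAt v v' t) :
    HasDerivAt (fun s => u s ⬝ᵥ v s) (u' ⬝ᵥ v t + u t ⬝ᵥ v') t := by
  simp only [_root_.dotProduct]
  rw [← Finset.sum_add_distrib]
  exact HasDerivAt.fun_sum fun i _ => (hasDerivAt_pi.mp hu i).mul (hasDerivAt_pi.mp hv i)

section AdjointAlgebra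

variable {R ι κ : Type*} [CommRing R] [Fintype ι] [Fintype κ]

theorem adjoint_dotProduct_error_deriv_eq_residuals
    (Fy : Matrix ι ι R) (Fz : Matrix ι κ R) (Gy : Matrix κ ι R)
    (φ e fyz fYZ Y' : ι → R) (ψ ez gY : κ → R)
    (hlinf : Fy *ᵥ e + Fz *ᵥ ez = fyz - fYZ) (hling : Gy *ᵥ e = -gY)
    (hadj : Fzᵀ *ᵥ φ = 0) :
    -(Fyᵀ *ᵥ φ + Gyᵀ *ᵥ ψ) ⬝ᵥ e + φ ⬝ᵥ (fyz - Y') = φ ⬝ᵥ (fYZ - Y') + ψ ⬝ᵥ gY := by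
  have hFz : φ ⬝ᵥ (Fz *ᵥ ez) = 0 := by
    rw [← dotProduct_transpose_mulVec, hadj, dotProduct_zero]
  rw [neg_dotProduct, add_dotProduct, dotProduct_comm (Fyᵀ *ᵥ φ), dotProduct_transpose_mulVec,
    dotProduct_comm (Gyᵀ *ᵥ ψ), dotProduct_transpose_mulVec, hling, eq_sub_of_add_eq hlinf]
  simp only [dotProduct_sub, dotProduct_neg, hFz]
  ring

theorem projected_terminal_dotProduct_eq [DecidableEq ι] (Fz : Matrix ι κ R) (Gy : Matrix κ ι R)
    (M : Matrix κ κ R) (ζ e : ι → R) (gY : κ → R) (hling : Gy *ᵥ e = -gY) :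
    ((1 - Gyᵀ * M * Fzᵀ) *ᵥ ζ) ⬝ᵥ e = e ⬝ᵥ ζ + ((M * Fzᵀ) *ᵥ ζ) ⬝ᵥ gY := by
  rw [sub_mulVec, one_mulVec, sub_dotProduct, Matrix.mul_assoc, ← mulVec_mulVec,
    dotProduct_comm (Gyᵀ *ᵥ _), dotProduct_transpose_mulVec, hling, dotProduct_neg,
    dotProduct_comm ζ]
  ring

end AdjointAlgebra

theorem hessenberg2_terminal_qoi_error_differential_only_general {n m : ℕ} (T : ℝ) (hT : 0 < T)
    (f : (Fin n → ℝ) × (Fin m → ℝ) → (Fin n → ℝ))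
    (g : (Fin n → ℝ) → (Fin m → ℝ))
    (hf : ContDiff ℝ 1 f) (hg : ContDiff ℝ 1 g)
    (y Y Y' φy : ℝ → Fin n → ℝ) (z Z φz : ℝ → Fin m → ℝ)
    (ζy : Fin n → ℝ)
    (fby : ℝ → Matrix (Fin n) (Fin n) ℝ) (fbz : ℝ → Matrix (Fin n) (Fin m) ℝ)
    (gby : ℝ → Matrix (Fin m) (Fin n) ℝ)
    -- the averaged Jacobians satisfy the linearization identities
    (hlinf : ∀ t, fby t *ᵥ (y t - Y t) + fbz t *ᵥ (z t - Z t)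
      = f (y t, z t) - f (Y t, Z t))
    (hling : ∀ t, gby t *ᵥ (y t - Y t) = -g (Y t))
    -- the true solution of the Hessenberg index-2 DAE
    (hy : ∀ t ∈ Set.Icc (0:ℝ) T, HasDerivAt y (f (y t, z t)) t)
    -- the approximate solution and its derivative
    (hY : ∀ t ∈ Set.Icc (0:ℝ) T, HasDerivAt Y (Y' t) t)
    -- the homogeneous adjoint DAE (ψ = 0, ḡ_z = 0)
    (hadj1 : ∀ t ∈ Set.Ico (0:ℝ) T,
      HasDerivAt φy (-((fby t)ᵀ *ᵥ φy t + (gby t)ᵀ *ᵥ φz t)) t)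
    (hadj2 : ∀ t ∈ Set.Ico (0:ℝ) T, (fbz t)ᵀ *ᵥ φy t = 0)
    -- sufficient smoothness for the integrals and integration by parts
    (hyc : Continuous y) (hYc : Continuous Y) (hY'c : Continuous Y')
    (hZc : Continuous Z)
    (hφyc : Continuous φy) (hφzc : Continuous φz)
    -- adjoint terminal condition (ζᶻ = 0)
    (hφT : φy T =
      (1 - (gby T)ᵀ * ((fbz T)ᵀ * (gby T)ᵀ)⁻¹ * (fbz T)ᵀ) *ᵥ ζy) :
    (y T - Y T) ⬝ᵥ ζy
    = (y 0 - Y 0) ⬝ᵥ φy 0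
      + (∫ t in (0:ℝ)..T, φy t ⬝ᵥ (f (Y t, Z t) - Y' t))
      + (∫ t in (0:ℝ)..T, φz t ⬝ᵥ g (Y t))
      - ((((fbz T)ᵀ * (gby T)ᵀ)⁻¹ * (fbz T)ᵀ) *ᵥ ζy) ⬝ᵥ g (Y T) := by
  have hderiv : ∀ t ∈ Set.Ioo (0:ℝ) T, HasDerivAt (fun s => φy s ⬝ᵥ (y s - Y s))
      (φy t ⬝ᵥ (f (Y t, Z t) - Y' t) + φz t ⬝ᵥ g (Y t)) t := by
    intro t ⟨h0, htT⟩
    have h := (hadj1 t ⟨h0.le, htT⟩).dotProduct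
      ((hy t ⟨h0.le, htT.le⟩).fun_sub (hY t ⟨h0.le, htT.le⟩))
    rwa [adjoint_dotProduct_error_deriv_eq_residuals _ _ _ _ _ _ _ _ _ _ _
      (hlinf t) (hling t) (hadj2 t ⟨h0.le, htT⟩)] at h
  have hresf : Continuous fun t => φy t ⬝ᵥ (f (Y t, Z t) - Y' t) :=
    hφyc.dotProduct ((hf.continuous.comp (hYc.prodMk hZc)).sub hY'c)
  have hresg : Continuous fun t => φz t ⬝ᵥ g (Y t) := hφzc.dotProduct (hg.continuous.comp hYc)
  have hpairing : Continuous fun t => φy t ⬝ᵥ (y t - Y t) := hφyc.dotProduct (hyc.sub hYc)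
  have hftc := intervalIntegral.integral_eq_sub_of_hasDerivAt_of_le hT.le
    hpairing.continuousOn hderiv ((hresf.add hresg).intervalIntegrable _ _)
  rw [intervalIntegral.integral_add (hresf.intervalIntegrable _ _) (hresg.intervalIntegrable _ _),
    hφT, projected_terminal_dotProduct_eq _ _ _ _ _ _ (hling T), dotProduct_comm (φy 0)] at hftc
  linarith

/-- Terminal-time QoI error representation for a Hessenberg index-2 DAE,
for a QoI involving only the differential variables. -/
theorem hessenberg2_terminal_qoi_error_differential_only {n m : ℕ} (T : ℝ) (hT : 0 < T)
    (f : (Fin n → ℝ) × (Fin m → ℝ) → (Fin n → ℝ))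
    (g : (Fin n → ℝ) → (Fin m → ℝ))
    (hf : ContDiff ℝ 1 f) (hg : ContDiff ℝ 1 g)
    (y Y Y' φy : ℝ → Fin n → ℝ) (z Z φz : ℝ → Fin m → ℝ)
    (ζy : Fin n → ℝ)
    (fby : ℝ → Matrix (Fin n) (Fin n) ℝ) (fbz : ℝ → Matrix (Fin n) (Fin m) ℝ)
    (gby : ℝ → Matrix (Fin m) (Fin n) ℝ)
    -- the averaged Jacobians satisfy the linearization identities
    (hlinf : ∀ t, fby t *ᵥ (y t - Y t) + fbz t *ᵥ (z t - Z t)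
      = f (y t, z t) - f (Y t, Z t))
    (hling : ∀ t, gby t *ᵥ (y t - Y t) = -g (Y t))
    -- the true solution of the Hessenberg index-2 DAE
    (hy : ∀ t ∈ Set.Icc (0:ℝ) T, HasDerivAt y (f (y t, z t)) t)
    (hcon : ∀ t ∈ Set.Icc (0:ℝ) T, g (y t) = 0)
    -- the approximate solution and its derivative
    (hY : ∀ t ∈ Set.Icc (0:ℝ) T, HasDerivAt Y (Y' t) t)
    -- the homogeneous adjoint DAE (ψ = 0, ḡ_z = 0)
    (hadj1 : ∀ t ∈ Set.Ico (0:ℝ) T,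
      HasDerivAt φy (-((fby t)ᵀ *ᵥ φy t + (gby t)ᵀ *ᵥ φz t)) t)
    (hadj2 : ∀ t ∈ Set.Ico (0:ℝ) T, (fbz t)ᵀ *ᵥ φy t = 0)
    -- sufficient smoothness for the integrals and integration by parts
    (hyc : Continuous y) (hYc : Continuous Y) (hY'c : Continuous Y')
    (hzc : Continuous z) (hZc : Continuous Z)
    (hφyc : Continuous φy) (hφzc : Continuous φz)
    -- invertibility of ḡ_y f̄_z at the terminal time
    (hinv : IsUnit (gby T * fbz T))
    -- adjoint terminal condition (ζᶻ = 0)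
    (hφT : φy T =
      (1 - (gby T)ᵀ * ((fbz T)ᵀ * (gby T)ᵀ)⁻¹ * (fbz T)ᵀ) *ᵥ ζy) :
    (y T - Y T) ⬝ᵥ ζy
    = (y 0 - Y 0) ⬝ᵥ φy 0
      + (∫ t in (0:ℝ)..T, φy t ⬝ᵥ (f (Y t, Z t) - Y' t))
      + (∫ t in (0:ℝ)..T, φz t ⬝ᵥ g (Y t))
      - ((((fbz T)ᵀ * (gby T)ᵀ)⁻¹ * (fbz T)ᵀ) *ᵥ ζy) ⬝ᵥ g (Y T) :=
  hessenberg2_terminal_qoi_error_differential_only_general T hT f g hf hg y Y Y' φy z Z φz ζy fby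
    fbz gby hlinf hling hy hY hadj1 hadj2 hyc hYc hY'c hZc hφyc hφzc hφT
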